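/- arXiv:2009.10391 — 3 statements merged into one kernel-verified Lean document; each statement's English description precedes it below -/
import Mathlib

section
/- Let g be a real Lie algebra, h ⊆ g a Lie subalgebra, and h^⊥ = {f ∈ g* : f(h) = 0}. Let r be the minimum over f ∈ h^⊥ of dim g_f, where g_f is the stabilizer of f under the coadjoint action. Then for every f₀ ∈ h^⊥ with dim g_{f₀} = r, one has [g_{f₀}, g_{f₀}] ⊆ h ∩ g_{f₀}. -/
/-!
The alternating form `B_f X W = f ⁅X, W⁆` has kernel `g_f`, so minimality of `dim g_{f₀}` says
that `B_{f₀}` has maximal rank among the forms `B_{f₀ + t φ}` with `φ ∈ h^⊥`. If `Y, Z ∈ g_{f₀}`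
had `⁅Y, Z⁆ ∉ h`, pick `φ ∈ h^⊥` with `φ ⁅Y, Z⁆ ≠ 0`. For a complement `U` of `g_{f₀}`, the Gram
matrix of `B_{f₀ + ε² φ}` on `U` together with `ε⁻¹ Y, ε⁻¹ Z` extends continuously to `ε = 0`,
where it is block diagonal with the nonsingular blocks `B_{f₀}|_U` and `φ ⁅Y, Z⁆ • !![0, 1; -1, 0]`.
So for some small `ε ≠ 0` the rank of `B_{f₀ + ε² φ}` exceeds that of `B_{f₀}` by two.
That `⁅Y, Z⁆ ∈ g_{f₀}` is the Jacobi identity.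
-/

/-- The stabilizer `g_f = {Y ∈ g : ∀ Z, f [Y,Z] = 0}` of a linear functional `f`
under the coadjoint action of a real Lie algebra `g`. -/
def coadjointStabilizer (g : Type*) [LieRing g] [LieAlgebra ℝ g]
    (f : Module.Dual ℝ g) : Submodule ℝ g where
  carrier := {Y : g | ∀ Z : g, f ⁅Y, Z⁆ = 0}
  add_mem' := by intro a b ha hb Z; rw [add_lie, map_add, ha, hb, add_zero]
  zero_mem' := by intro Z; rw [zero_lie, map_zero]
  smul_mem' := by intro c a ha Z; rw [smul_lie, map_smul, ha, smul_zero]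

open Module Matrix LinearMap

section GramMatrix

variable {K V : Type*} [Field K] [AddCommGroup V] [Module K V] {ι κ : Type*}

def gramMatrix (B : LinearMap.BilinForm K V) (u : ι → V) (v : κ → V) : Matrix ι κ K :=
  Matrix.of fun i j => B (u i) (v j)

@[simp]
lemma gramMatrix_apply (B : LinearMap.BilinForm K V) (u : ι → V) (v : κ → V) (i : ι) (j : κ) :
    gramMatrix B u v i j = B (u i) (v j) := rfl

lemma card_le_finrank_range_of_det_gramMatrix_ne_zero [FiniteDimensional K V] [Fintype ι]
    [DecidableEq ι] {B : LinearMap.BilinForm K V} {w : ι → V} (h : (gramMatrix B w w).det ≠ 0) :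
    Fintype.card ι ≤ finrank K (range B) := by
  let eval : Dual K V →ₗ[K] ι → K := LinearMap.pi fun j => LinearMap.applyₗ (w j)
  have hrows : LinearIndependent K
      (eval ∘ (range B).subtype ∘ fun i => ⟨B (w i), mem_range_self B (w i)⟩) :=
    linearIndependent_rows_of_det_ne_zero h
  exact (hrows.of_comp _ |>.of_comp _).fintype_card_le_finrank

lemma det_gramMatrix_basis_ne_zero_of_isCompl_ker [Fintype ι]
    [DecidableEq ι] {B : LinearMap.BilinForm K V} (hB : B.IsRefl) {U : Submodule K V}
    (hU : IsCompl U (ker B)) (u : Basis ι K U) :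
    (gramMatrix B (U.subtype ∘ u) (U.subtype ∘ u)).det ≠ 0 := by
  have hdisj : Disjoint U (U.orthogonalBilin B) := by
    refine Submodule.disjoint_def.mpr fun x hxU hxo =>
      Submodule.disjoint_def.mp hU.disjoint x hxU ?_
    ext y
    obtain ⟨a, ha, k, hk, rfl⟩ :=
      Submodule.mem_sup.mp (hU.sup_eq_top ▸ Submodule.mem_top (x := y))
    have hxa : B x a = 0 := hB _ _ (hxo a ha)
    have hxk : B x k = 0 := hB _ _ (by rw [mem_ker.mp hk, LinearMap.zero_apply])
    simp [hxa, hxk]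
  convert (nondegenerate_iff_det_ne_zero u).mp
    (nondegenerate_restrict_of_disjoint_orthogonal hB hdisj)
  ext i j
  simp [toMatrix₂_apply, domRestrict₁₂_apply]

lemma gramMatrix_sumElim (B : LinearMap.BilinForm K V) (a : ι → V) (b : κ → V) :
    gramMatrix B (Sum.elim a b) (Sum.elim a b) =
      fromBlocks (gramMatrix B a a) (gramMatrix B a b) (gramMatrix B b a) (gramMatrix B b b) := by
  ext (i | i) (j | j) <;> rfl

lemma det_gramMatrix_pair_of_isAlt {B : LinearMap.BilinForm K V} (hB : B.IsAlt) (x y : V) :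
    (gramMatrix B ![x, y] ![x, y]).det = B x y ^ 2 := by
  simp [det_fin_two, hB.self_eq_zero, ← LinearMap.IsAlt.neg hB x y, sq]

end GramMatrix

lemma exists_ne_det_ne_zero_of_continuous {X R n : Type*} [TopologicalSpace X] [CommRing R]
    [TopologicalSpace R] [IsTopologicalRing R] [T1Space R] [Fintype n] [DecidableEq n]
    {G : X → Matrix n n R} (hG : Continuous G) {x : X} [(nhdsWithin x {x}ᶜ).NeBot]
    (hx : (G x).det ≠ 0) : ∃ y ≠ x, (G y).det ≠ 0 := by
  have hnear : ∀ᶠ y in nhdsWithin x {x}ᶜ, (G y).det ≠ 0 :=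
    (hG.matrix_det.continuousAt.eventually_ne hx).filter_mono nhdsWithin_le_nhds
  obtain ⟨y, hy, hyx⟩ := (hnear.and self_mem_nhdsWithin).exists
  exact ⟨y, hyx, hy⟩

theorem exists_finrank_ker_add_card_le {𝕜 V ι : Type*} [NontriviallyNormedField 𝕜]
    [AddCommGroup V] [Module 𝕜 V] [FiniteDimensional 𝕜 V] [Fintype ι] [DecidableEq ι]
    {B₀ : LinearMap.BilinForm 𝕜 V} (hB₀ : B₀.IsRefl) (B₁ : LinearMap.BilinForm 𝕜 V)
    {v : ι → V} (hv : ∀ k, v k ∈ ker B₀) (hdet : (gramMatrix B₁ v v).det ≠ 0) :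
    ∃ t : 𝕜, finrank 𝕜 (ker (B₀ + t • B₁)) + Fintype.card ι ≤ finrank 𝕜 (ker B₀) := by
  obtain ⟨U, hU⟩ := Submodule.exists_isCompl (ker B₀)
  let u := U.subtype ∘ finBasis 𝕜 U
  let G : 𝕜 → Matrix (Fin (finrank 𝕜 U) ⊕ ι) (Fin (finrank 𝕜 U) ⊕ ι) 𝕜 := fun ε =>
    fromBlocks (gramMatrix B₀ u u + ε ^ 2 • gramMatrix B₁ u u) (ε • gramMatrix B₁ u v)
      (ε • gramMatrix B₁ v u) (gramMatrix B₁ v v)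
  have hG : Continuous G := by
    refine Continuous.matrix_fromBlocks ?_ ?_ ?_ continuous_const <;> fun_prop
  have hG₀ : (G 0).det ≠ 0 := by
    rw [show G 0 = fromBlocks (gramMatrix B₀ u u) 0 0 (gramMatrix B₁ v v) by simp [G],
      det_fromBlocks_zero₂₁]
    exact mul_ne_zero (det_gramMatrix_basis_ne_zero_of_isCompl_ker hB₀ hU.symm _) hdet
  obtain ⟨ε, hε, hGε⟩ := exists_ne_det_ne_zero_of_continuous hG hG₀
  have hgram :
      gramMatrix (B₀ + ε ^ 2 • B₁) (Sum.elim u (ε⁻¹ • v)) (Sum.elim u (ε⁻¹ • v)) = G ε := by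
    have hv₀ : ∀ x k, B₀ (v k) x = 0 := fun x k => by
      rw [mem_ker.mp (hv k), LinearMap.zero_apply]
    have hv₀' : ∀ x k, B₀ x (v k) = 0 := fun x k => hB₀ _ _ (hv₀ x k)
    rw [gramMatrix_sumElim]
    congr 1 <;> ext i j <;> simp [hv₀, hv₀'] <;> field_simp
  refine ⟨ε ^ 2, ?_⟩
  have hrank := card_le_finrank_range_of_det_gramMatrix_ne_zero (hgram ▸ hGε)
  have hdim := (B₀ + ε ^ 2 • B₁).finrank_range_add_finrank_ker
  have hdim₀ := B₀.finrank_range_add_finrank_ker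
  have hdimU := Submodule.finrank_add_eq_of_isCompl hU
  simp only [Fintype.card_sum, Fintype.card_fin] at hrank
  omega

section Coadjoint

variable {g : Type*} [LieRing g] [LieAlgebra ℝ g]

def coadjointForm (f : Module.Dual ℝ g) : LinearMap.BilinForm ℝ g :=
  (LieModule.toEnd ℝ g g : g →ₗ[ℝ] Module.End ℝ g).compr₂ f

@[simp]
lemma coadjointForm_apply (f : Module.Dual ℝ g) (X Y : g) : coadjointForm f X Y = f ⁅X, Y⁆ := rfl

lemma coadjointForm_isAlt (f : Module.Dual ℝ g) : (coadjointForm f).IsAlt := fun X => by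
  simp

lemma coadjointForm_add_smul (f φ : Module.Dual ℝ g) (t : ℝ) :
    coadjointForm (f + t • φ) = coadjointForm f + t • coadjointForm φ := by
  ext X Y
  simp

lemma ker_coadjointForm (f : Module.Dual ℝ g) :
    ker (coadjointForm f) = coadjointStabilizer g f := by
  ext X
  simp only [mem_ker, LinearMap.ext_iff, coadjointForm_apply, LinearMap.zero_apply]
  rfl

lemma lie_mem_coadjointStabilizer {f : Module.Dual ℝ g} {Y Z : g}
    (hY : Y ∈ coadjointStabilizer g f) (hZ : Z ∈ coadjointStabilizer g f) :
    ⁅Y, Z⁆ ∈ coadjointStabilizer g f := fun W => by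
  rw [lie_lie, map_sub, hY, hZ, sub_zero]

end Coadjoint

/-- Let `g` be a finite-dimensional real Lie algebra, `h ⊆ g` a subalgebra and
`h^⊥ = {f ∈ g* : f(h) = 0}`.  If `f₀ ∈ h^⊥` has coadjoint stabilizer of minimal
dimension among all `f ∈ h^⊥`, then `[g_{f₀}, g_{f₀}] ⊆ h ∩ g_{f₀}`. -/
theorem coadjoint_minimal_stabilizer_bracket_mem
    {g : Type*} [LieRing g] [LieAlgebra ℝ g] [FiniteDimensional ℝ g]
    (h : LieSubalgebra ℝ g) (f₀ : Module.Dual ℝ g)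
    (hf₀ : ∀ Y ∈ h, f₀ Y = 0)
    (hmin : ∀ f : Module.Dual ℝ g, (∀ Y ∈ h, f Y = 0) →
      Module.finrank ℝ (coadjointStabilizer g f₀) ≤ Module.finrank ℝ (coadjointStabilizer g f)) :
    ∀ Y ∈ coadjointStabilizer g f₀, ∀ Z ∈ coadjointStabilizer g f₀,
      ⁅Y, Z⁆ ∈ h ∧ ⁅Y, Z⁆ ∈ coadjointStabilizer g f₀ := by
  intro Y hY Z hZ
  refine ⟨?_, lie_mem_coadjointStabilizer hY hZ⟩
  by_contra hYZ
  obtain ⟨φ, hφ, hφYZ⟩ : ∃ φ ∈ h.toSubmodule.dualAnnihilator, φ ⁅Y, Z⁆ ≠ 0 := by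
    by_contra! hall
    exact hYZ ((Subspace.forall_mem_dualAnnihilator_apply_eq_zero_iff _ _).mp hall)
  have hYZ_ker : ∀ k, ![Y, Z] k ∈ ker (coadjointForm f₀) := by
    rw [ker_coadjointForm]
    intro k; fin_cases k <;> assumption
  obtain ⟨t, ht⟩ := exists_finrank_ker_add_card_le (coadjointForm_isAlt f₀).isRefl
    (coadjointForm φ) hYZ_ker
    (by rw [det_gramMatrix_pair_of_isAlt (coadjointForm_isAlt φ)]; exact pow_ne_zero 2 hφYZ)
  have hmin_t := hmin (f₀ + t • φ) fun X hX => by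
    simp [hf₀ X hX, (Submodule.mem_dualAnnihilator φ).mp hφ X hX]
  rw [← coadjointForm_add_smul, ker_coadjointForm, ker_coadjointForm] at ht
  simp only [Fintype.card_fin] at ht
  omega
end

section
/- Let g be a complex semisimple Lie algebra, h ⊆ g a Lie subalgebra, h₀ = [h,h], and G the adjoint group. If the closure of the Ad(G)-orbit of h₀ in the Grassmannian contains a solvable Lie subalgebra, then the closure of the Ad(G)-orbit of h also contains a solvable Lie subalgebra. -/
/-!
Along a subsequence, the subspaces `Ad(φ n) h` converge to some `r` of dimension `dim h`
(compactness of the Grassmannian). A subspace is the limit of a sequence of subspaces of its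
own dimension as soon as it is contained in their Kuratowski lower limit, and then it equals
that lower limit. Since `h₀ ⊆ h`, this gives `r₀ ⊆ r`; and brackets of elements of `r` are
limits of brackets of elements of `Ad(φ n) h`, which lie in `Ad(φ n) h₀`, so `[r, r] ⊆ r₀`.
Thus `[r, r]` is solvable, and hence so is `r`.
-/

variable {g : Type*} [LieRing g] [LieAlgebra ℂ g] [FiniteDimensional ℂ g]
  [TopologicalSpace g] [IsTopologicalAddGroup g] [ContinuousSMul ℂ g] [T2Space g]

/-- `r` is a Grassmannian limit of the sequence of subalgebras `s n`: all the `s n` have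
the dimension of `r` and every element of `r` is a limit of elements of the `s n`. -/
def IsSubalgebraLimit (s : ℕ → LieSubalgebra ℂ g) (r : LieSubalgebra ℂ g) : Prop :=
  (∀ n, Module.finrank ℂ (s n) = Module.finrank ℂ r) ∧
    ∀ Y ∈ r, ∃ u : ℕ → g, (∀ n, u n ∈ s n) ∧ Filter.Tendsto u Filter.atTop (nhds Y)

open Filter Topology Module

section LowerLimit

variable {X Y Z : Type*} [TopologicalSpace X] [TopologicalSpace Y] [TopologicalSpace Z]

/-- The Kuratowski lower limit of a sequence of sets. -/
def lowerLimit (s : ℕ → Set X) : Set X :=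
  {x | ∃ u : ℕ → X, (∀ n, u n ∈ s n) ∧ Tendsto u atTop (𝓝 x)}

theorem lowerLimit_mono {s t : ℕ → Set X} (h : ∀ n, s n ⊆ t n) : lowerLimit s ⊆ lowerLimit t :=
  fun _ ⟨u, hu, hlim⟩ => ⟨u, fun n => h n (hu n), hlim⟩

theorem lowerLimit_subset_comp {s : ℕ → Set X} {σ : ℕ → ℕ} (hσ : Tendsto σ atTop atTop) :
    lowerLimit s ⊆ lowerLimit (s ∘ σ) :=
  fun _ ⟨u, hu, hlim⟩ => ⟨u ∘ σ, fun n => hu (σ n), hlim.comp hσ⟩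

theorem map₂_mem_lowerLimit {f : X → Y → Z} (hf : Continuous (Function.uncurry f))
    {s : ℕ → Set X} {t : ℕ → Set Y} {w : ℕ → Set Z}
    (hst : ∀ n, ∀ a ∈ s n, ∀ b ∈ t n, f a b ∈ w n) {x : X} {y : Y}
    (hx : x ∈ lowerLimit s) (hy : y ∈ lowerLimit t) : f x y ∈ lowerLimit w := by
  obtain ⟨u, hu, hul⟩ := hx
  obtain ⟨v, hv, hvl⟩ := hy
  exact ⟨fun n => f (u n) (v n), fun n => hst n _ (hu n) _ (hv n),
    (hf.tendsto (x, y)).comp (hul.prodMk_nhds hvl)⟩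

end LowerLimit

namespace Submodule

variable {R M N : Type*} [Semiring R] [AddCommMonoid M] [Module R M] [TopologicalSpace M]
  [ContinuousAdd M] [ContinuousConstSMul R M]
  [AddCommMonoid N] [Module R N] [TopologicalSpace N] [ContinuousAdd N] [ContinuousConstSMul R N]

def lowerLimit (s : ℕ → Submodule R M) : Submodule R M where
  carrier := _root_.lowerLimit fun n => s n
  add_mem' := map₂_mem_lowerLimit continuous_add fun n _ ha _ hb => (s n).add_mem ha hb
  zero_mem' := ⟨0, fun n => (s n).zero_mem, tendsto_const_nhds⟩
  smul_mem' c _ := fun ⟨u, hu, hlim⟩ => ⟨c • u, fun n => (s n).smul_mem c (hu n), hlim.const_smul c⟩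

theorem lowerLimit_mono {s t : ℕ → Submodule R M} (h : ∀ n, s n ≤ t n) :
    lowerLimit s ≤ lowerLimit t :=
  _root_.lowerLimit_mono h

theorem lowerLimit_le_comp (s : ℕ → Submodule R M) {σ : ℕ → ℕ} (hσ : Tendsto σ atTop atTop) :
    lowerLimit s ≤ lowerLimit (s ∘ σ) :=
  lowerLimit_subset_comp hσ

theorem map_lowerLimit_le {f : M →ₗ[R] N} (hf : Continuous f) (s : ℕ → Submodule R M) :
    (lowerLimit s).map f ≤ lowerLimit fun n => (s n).map f := by
  rintro _ ⟨x, ⟨u, hu, hlim⟩, rfl⟩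
  exact ⟨f ∘ u, fun n => mem_map_of_mem (hu n), (hf.tendsto x).comp hlim⟩

end Submodule

section FiniteDimensional

variable {𝕜 E : Type*} [NontriviallyNormedField 𝕜] [CompleteSpace 𝕜] [AddCommGroup E]
  [Module 𝕜 E] [TopologicalSpace E] [IsTopologicalAddGroup E] [ContinuousSMul 𝕜 E] [T2Space E]
  [FiniteDimensional 𝕜 E]

theorem LinearIndependent.eventually_of_t2Space {ι : Type*} [Finite ι] {f : ι → E}
    (hf : LinearIndependent 𝕜 f) : ∀ᶠ g in 𝓝 f, LinearIndependent 𝕜 g := by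
  let e := (finBasis 𝕜 E).equivFun.toContinuousLinearEquiv
  have he : Tendsto (fun g : ι → E => e ∘ g) (𝓝 f) (𝓝 (e ∘ f)) :=
    (continuous_pi fun i => e.continuous.comp (continuous_apply i)).tendsto f
  exact (he.eventually (hf.map' e.toLinearMap e.toLinearEquiv.ker).eventually).mono
    fun g hg => hg.of_comp e.toLinearMap

/-- If `z ∉ r`, a basis of `r` followed by `z` is linearly independent, hence so are nearby
families of vectors of `s n`; but such a family is one vector too many for `s n`. -/
theorem Submodule.lowerLimit_eq_of_le {s : ℕ → Submodule 𝕜 E} {r : Submodule 𝕜 E}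
    (hdim : ∀ n, finrank 𝕜 (s n) ≤ finrank 𝕜 r) (hr : r ≤ lowerLimit s) :
    lowerLimit s = r := by
  refine le_antisymm (fun z hz => ?_) hr
  by_contra hzr
  let b := finBasis 𝕜 r
  have hli : LinearIndependent 𝕜 (Fin.snoc (fun i => (b i : E)) z) := by
    refine linearIndependent_finSnoc.2 ⟨b.linearIndependent.map' r.subtype r.ker_subtype, ?_⟩
    rwa [Set.range_comp', ← r.coe_subtype, span_image, b.span_eq, map_top, range_subtype]
  choose u hu hulim using fun i => hr (b i).2
  obtain ⟨v, hv, hvlim⟩ := hz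
  obtain ⟨n, hn⟩ := ((tendsto_pi_nhds.2 hulim).finSnoc hvlim).eventually
    hli.eventually_of_t2Space |>.exists
  have hspan : span 𝕜 (Set.range (Fin.snoc (fun i => u i n) (v n))) ≤ s n := by
    refine span_le.2 (Set.range_subset_iff.2 fun j => Fin.lastCases ?_ (fun i => ?_) j)
    · simpa using hv n
    · simpa using hu i n
  have := (finrank_span_eq_card hn).symm.trans_le ((finrank_mono hspan).trans (hdim n))
  simp at this

end FiniteDimensional

section InnerProductSpace

variable {𝕜 F : Type*} [RCLike 𝕜] [NormedAddCommGroup F] [InnerProductSpace 𝕜 F]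
  [FiniteDimensional 𝕜 F]

/-- Compactness of the Grassmannian: a subsequence of orthonormal bases of the `s n` converges
to an orthonormal family, whose span is the limit. -/
theorem Submodule.exists_strictMono_le_lowerLimit_of_inner {s : ℕ → Submodule 𝕜 F} {k : ℕ}
    (hs : ∀ n, finrank 𝕜 (s n) = k) :
    ∃ σ : ℕ → ℕ, StrictMono σ ∧ ∃ r : Submodule 𝕜 F, finrank 𝕜 r = k ∧ r ≤ lowerLimit (s ∘ σ) := by
  have := FiniteDimensional.proper_rclike 𝕜 F
  let V : ℕ → Fin k → F := fun n i =>
    ((stdOrthonormalBasis 𝕜 (s n)).reindex (finCongr (hs n)) i : F)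
  have hV : ∀ n, Orthonormal 𝕜 (V n) := fun n =>
    (OrthonormalBasis.orthonormal _).comp_linearIsometry (s n).subtypeₗᵢ
  have hbdd : ∀ n, V n ∈ Metric.closedBall (0 : Fin k → F) 1 := fun n => by
    simpa [pi_norm_le_iff_of_nonneg zero_le_one] using fun i => ((hV n).1 i).le
  obtain ⟨C, -, σ, hσ, hlim⟩ := tendsto_subseq_of_bounded Metric.isBounded_closedBall hbdd
  have hC : Orthonormal 𝕜 C := by
    refine orthonormal_iff_ite.2 fun i j => tendsto_nhds_unique
      ((tendsto_pi_nhds.1 hlim i).inner (tendsto_pi_nhds.1 hlim j)) ?_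
    simpa only [Function.comp_apply, orthonormal_iff_ite.1 (hV _)] using tendsto_const_nhds
  refine ⟨σ, hσ, span 𝕜 (Set.range C), by
    rw [finrank_span_eq_card hC.linearIndependent, Fintype.card_fin], span_le.2 ?_⟩
  exact Set.range_subset_iff.2 fun i =>
    ⟨fun n => V (σ n) i, fun n => Subtype.prop _, tendsto_pi_nhds.1 hlim i⟩

end InnerProductSpace

section RCLike

variable {𝕜 E : Type*} [RCLike 𝕜] [AddCommGroup E] [Module 𝕜 E] [TopologicalSpace E]
  [IsTopologicalAddGroup E] [ContinuousSMul 𝕜 E] [T2Space E] [FiniteDimensional 𝕜 E]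

theorem Submodule.exists_strictMono_le_lowerLimit {s : ℕ → Submodule 𝕜 E} {k : ℕ}
    (hs : ∀ n, finrank 𝕜 (s n) = k) :
    ∃ σ : ℕ → ℕ, StrictMono σ ∧ ∃ r : Submodule 𝕜 E, finrank 𝕜 r = k ∧ r ≤ lowerLimit (s ∘ σ) := by
  let F := EuclideanSpace 𝕜 (Fin (finrank 𝕜 E))
  let e : E ≃ₗ[𝕜] F := LinearEquiv.ofFinrankEq _ _ (by simp [F])
  obtain ⟨σ, hσ, r, hr, hle⟩ := exists_strictMono_le_lowerLimit_of_inner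
    (s := fun n => (s n).map (e : E →ₗ[𝕜] F)) fun n => by rw [e.finrank_map_eq, hs]
  refine ⟨σ, hσ, r.map (e.symm : F →ₗ[𝕜] E), by rw [e.symm.finrank_map_eq, hr], ?_⟩
  calc r.map (e.symm : F →ₗ[𝕜] E)
      ≤ (lowerLimit _).map (e.symm : F →ₗ[𝕜] E) := map_mono hle
    _ ≤ lowerLimit _ := map_lowerLimit_le e.symm.toContinuousLinearEquiv.continuous _
    _ = lowerLimit (s ∘ σ) := by
      congr 1; funext n; exact (map_symm_eq_iff e).2 rfl

end RCLike

theorem continuous_lie_of_finiteDimensional {𝕜 L : Type*} [NontriviallyNormedField 𝕜]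
    [CompleteSpace 𝕜] [LieRing L] [LieAlgebra 𝕜 L] [TopologicalSpace L] [IsTopologicalAddGroup L]
    [ContinuousSMul 𝕜 L] [T2Space L] [FiniteDimensional 𝕜 L] :
    Continuous fun p : L × L => ⁅p.1, p.2⁆ := by
  have := isModuleTopologyOfFiniteDimensional (𝕜 := 𝕜) (E := L)
  exact IsModuleTopology.continuous_bilinear_of_finite_left
    (LieModule.toEnd 𝕜 L L : L →ₗ[𝕜] Module.End 𝕜 L)

namespace LieAlgebra

variable (R : Type*) {L : Type*} [CommRing R] [LieRing L] [LieAlgebra R L]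

theorem isSolvable_of_isSolvable_derivedSeries_one [IsSolvable (derivedSeries R L 1)] :
    IsSolvable L := by
  obtain ⟨k, hk⟩ := IsSolvable.solvable R (L := derivedSeries R L 1)
  refine IsSolvable.mk (R := R) (k := k + 1) ?_
  rw [derivedSeries_def, derivedSeriesOfIdeal_add, ← derivedSeries_def]
  exact (LieIdeal.derivedSeries_eq_bot_iff _ k).mp hk

end LieAlgebra

namespace LieSubalgebra

variable {R L : Type*} [CommRing R] [LieRing L] [LieAlgebra R L]

theorem isSolvable_of_lie_mem {K K₀ : LieSubalgebra R L} [LieAlgebra.IsSolvable K₀]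
    (h : ∀ x ∈ K, ∀ y ∈ K, ⁅x, y⁆ ∈ K₀) : LieAlgebra.IsSolvable K := by
  have hderived : ∀ x : K, x ∈ LieAlgebra.derivedSeries R K 1 → (x : L) ∈ K₀ := by
    intro x hx
    rw [LieAlgebra.derivedSeries_def, LieAlgebra.derivedSeriesOfIdeal_succ,
      LieAlgebra.derivedSeriesOfIdeal_zero, ← LieSubmodule.mem_toSubmodule,
      LieSubmodule.lieIdeal_oper_eq_linear_span'] at hx
    refine Submodule.span_induction ?_ ?_ ?_ ?_ hx
    · rintro _ ⟨a, -, b, -, rfl⟩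
      exact h a a.2 b b.2
    · exact K₀.zero_mem
    · intro _ _ _ _; exact K₀.add_mem
    · intro t _ _; exact K₀.smul_mem t
  let f : LieAlgebra.derivedSeries R K 1 →ₗ⁅R⁆ K₀ :=
    { toFun x := ⟨x, hderived x x.2⟩
      map_add' _ _ := rfl
      map_smul' _ _ := rfl
      map_lie' := rfl }
  have hf : Function.Injective f := fun x y hxy => by
    simpa [f] using congrArg Subtype.val hxy
  have := hf.lieAlgebra_isSolvable
  exact LieAlgebra.isSolvable_of_isSolvable_derivedSeries_one R

theorem lie_mem_map_of_lie_mem {L' : Type*} [LieRing L'] [LieAlgebra R L']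
    {K K₀ : LieSubalgebra R L} (hK : ∀ x ∈ K, ∀ y ∈ K, ⁅x, y⁆ ∈ K₀) (f : L →ₗ⁅R⁆ L') {x y : L'}
    (hx : x ∈ K.map f) (hy : y ∈ K.map f) : ⁅x, y⁆ ∈ K₀.map f := by
  obtain ⟨a, ha, rfl⟩ := hx
  obtain ⟨b, hb, rfl⟩ := hy
  exact ⟨⁅a, b⁆, hK a ha b hb, f.map_lie a b⟩

end LieSubalgebra

theorem orbit_closure_solvable_of_derived_general
    (h h₀ : LieSubalgebra ℂ g)
    (hh₀ : h₀.toSubmodule = Submodule.span ℂ {z : g | ∃ x ∈ h, ∃ y ∈ h, z = ⁅x, y⁆})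
    (hyp : ∃ (φ : ℕ → (g ≃ₗ⁅ℂ⁆ g)) (r₀ : LieSubalgebra ℂ g),
      IsSubalgebraLimit (fun n => h₀.map (φ n).toLieHom) r₀ ∧ LieAlgebra.IsSolvable r₀) :
    ∃ (ψ : ℕ → (g ≃ₗ⁅ℂ⁆ g)) (r : LieSubalgebra ℂ g),
      IsSubalgebraLimit (fun n => h.map (ψ n).toLieHom) r ∧ LieAlgebra.IsSolvable r := by
  obtain ⟨φ, r₀, ⟨hdim₀, happrox₀⟩, hsolv₀⟩ := hyp
  have hlie : ∀ x ∈ h, ∀ y ∈ h, ⁅x, y⁆ ∈ h₀ := fun x hx y hy => by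
    rw [← LieSubalgebra.mem_toSubmodule, hh₀]
    exact Submodule.subset_span ⟨x, hx, y, hy, rfl⟩
  have hh₀h : h₀.toSubmodule ≤ h.toSubmodule :=
    hh₀ ▸ Submodule.span_le.2 fun _ ⟨x, hx, y, hy, hz⟩ => hz ▸ h.lie_mem hx hy
  let S n := (h.map (φ n).toLieHom).toSubmodule
  let S₀ n := (h₀.map (φ n).toLieHom).toSubmodule
  have hdim n : finrank ℂ (S n) = finrank ℂ h := (φ n).toLinearEquiv.finrank_map_eq h.toSubmodule
  obtain ⟨σ, hσ, r, hr, hrS⟩ := Submodule.exists_strictMono_le_lowerLimit hdim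
  have hS : Submodule.lowerLimit (S ∘ σ) = r :=
    Submodule.lowerLimit_eq_of_le (fun n => (hdim (σ n)).trans hr.symm |>.le) hrS
  have hS₀ : Submodule.lowerLimit (S₀ ∘ σ) = r₀.toSubmodule :=
    Submodule.lowerLimit_eq_of_le (fun n => (hdim₀ (σ n)).le)
      (le_trans (fun Y hY => happrox₀ Y hY) (Submodule.lowerLimit_le_comp S₀ hσ.tendsto_atTop))
  have hr₀r : r₀.toSubmodule ≤ r :=
    hS₀ ▸ hS ▸ Submodule.lowerLimit_mono fun n => Submodule.map_mono hh₀h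
  have hbracket : ∀ x ∈ r, ∀ y ∈ r, ⁅x, y⁆ ∈ r₀.toSubmodule := by
    rw [← hS, ← hS₀]
    exact fun x hx y hy => map₂_mem_lowerLimit (continuous_lie_of_finiteDimensional (𝕜 := ℂ))
      (fun n _ ha _ hb => LieSubalgebra.lie_mem_map_of_lie_mem hlie _ ha hb) hx hy
  let r' : LieSubalgebra ℂ g := { r with lie_mem' := fun hx hy => hr₀r (hbracket _ hx _ hy) }
  exact ⟨φ ∘ σ, r', ⟨fun n => (hdim (σ n)).trans hr.symm, fun Y hY => hrS hY⟩,
    LieSubalgebra.isSolvable_of_lie_mem (K₀ := r₀) hbracket⟩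

/-- Let `g` be a complex semisimple Lie algebra, `h ⊆ g` a Lie subalgebra and
`h₀ = [h,h]` its derived subalgebra.  If the closure of the orbit of `h₀` under the
adjoint group (a sequence of automorphisms `φ n`) contains a solvable Lie subalgebra,
then the closure of the orbit of `h` also contains a solvable Lie subalgebra. -/
theorem orbit_closure_solvable_of_derived
    [LieAlgebra.IsSemisimple ℂ g]
    (h h₀ : LieSubalgebra ℂ g)
    (hh₀ : h₀.toSubmodule = Submodule.span ℂ {z : g | ∃ x ∈ h, ∃ y ∈ h, z = ⁅x, y⁆})
    (hyp : ∃ (φ : ℕ → (g ≃ₗ⁅ℂ⁆ g)) (r₀ : LieSubalgebra ℂ g),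
      IsSubalgebraLimit (fun n => h₀.map (φ n).toLieHom) r₀ ∧ LieAlgebra.IsSolvable r₀) :
    ∃ (ψ : ℕ → (g ≃ₗ⁅ℂ⁆ g)) (r : LieSubalgebra ℂ g),
      IsSubalgebraLimit (fun n => h.map (ψ n).toLieHom) r ∧ LieAlgebra.IsSolvable r :=
  orbit_closure_solvable_of_derived_general h h₀ hh₀ hyp
end

section
/- Let g₀ = l₀ ⊕ u₀ be a complex algebraic Lie algebra with reductive part l₀ and nilradical u₀, and let h ⊆ g₀ be an ideal of a parabolic with h = s ⊕ v where s = h ∩ l₀ is an ideal of l₀ and v = h ∩ u₀. If h is an ideal of g₀ and ρ_{l₀}(Y) ≤ 2·ρ_{g₀/h}(Y) = 0 for all Y ∈ s, then s is abelian and h is solvable. -/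
variable {g₀ : Type*} [LieRing g₀] [LieAlgebra ℂ g₀] [FiniteDimensional ℂ g₀]

/-- `ρ` of an endomorphism of a finite-dimensional complex vector space: half the sum of
the absolute values of the real parts of its eigenvalues. -/
noncomputable def rhoEnd {V : Type*} [AddCommGroup V] [Module ℂ V] [Module.Finite ℂ V]
    (f : Module.End ℂ V) : ℝ :=
  (1 / 2) * ((f.charpoly.roots.map fun z => |z.re|).sum)

/-- `ρ_k(Y)` for `Y ∈ k`: `ρ` of the adjoint action of `Y` on the subalgebra `k`. -/
noncomputable def rhoSub (k : LieSubalgebra ℂ g₀) (Y : g₀) (hY : Y ∈ k) : ℝ :=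
  rhoEnd ((LieAlgebra.ad ℂ g₀ Y).restrict (p := k.toSubmodule) (q := k.toSubmodule)
    fun x hx => by simpa using k.lie_mem hY hx)

/-- `ρ_{g₀/h}(Y)` for `Y ∈ h`: `ρ` of the action of `Y` on the quotient `g₀/h`. -/
noncomputable def rhoQuot (h : LieSubalgebra ℂ g₀) (Y : g₀) (hY : Y ∈ h) : ℝ :=
  rhoEnd (Submodule.mapQ h.toSubmodule h.toSubmodule (LieAlgebra.ad ℂ g₀ Y)
    fun x hx => by simpa using h.lie_mem hY hx)

/-!
For `Y ∈ s`, vanishing of `ρ_{l₀}` at both `Y` and `i Y` forces the real and the imaginary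
part of every eigenvalue of `ad Y` on `l₀` to vanish, so `ad Y` is nilpotent. By Engel's
theorem `s` is a nilpotent, hence solvable, ideal of `l₀`; it therefore lies in the radical,
which is the centre, so `s` is abelian. Consequently `⁅h, h⁆ ⊆ ⁅s, s⁆ + u₀ = u₀`, and `h` is
solvable because `u₀` is.
-/

open Polynomial LieAlgebra

theorem Module.End.isNilpotent_of_forall_mem_roots_charpoly_eq_zero {K V : Type*} [Field K]
    [IsAlgClosed K] [AddCommGroup V] [Module K V] [Module.Finite K V] (f : Module.End K V)
    (hf : ∀ μ ∈ f.charpoly.roots, μ = 0) : IsNilpotent f := by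
  have hX : f.charpoly = X ^ Multiset.card f.charpoly.roots := by
    conv_lhs => rw [(IsAlgClosed.splits f.charpoly).eq_prod_roots_of_monic f.charpoly_monic,
      Multiset.eq_replicate_card.2 hf]
    simp
  have := f.aeval_self_charpoly
  rw [hX] at this
  exact ⟨_, by simpa using this⟩

theorem Module.End.mul_mem_roots_charpoly_smul {K V : Type*} [Field K] [AddCommGroup V]
    [Module K V] [Module.Finite K V] (f : Module.End K V) (c : K) {μ : K}
    (hμ : μ ∈ f.charpoly.roots) : c * μ ∈ (c • f).charpoly.roots := by
  rw [mem_roots (c • f).charpoly_monic.ne_zero, ← hasEigenvalue_iff_isRoot_charpoly]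
  rw [mem_roots f.charpoly_monic.ne_zero, ← hasEigenvalue_iff_isRoot_charpoly] at hμ
  obtain ⟨v, hv⟩ := hμ.exists_hasEigenvector
  refine hasEigenvalue_of_hasEigenvector (x := v) ⟨?_, hv.2⟩
  simp [hv.apply_eq_smul, smul_smul]

section rho

variable {V : Type*} [AddCommGroup V] [Module ℂ V] [Module.Finite ℂ V]

theorem rhoEnd_nonneg (f : Module.End ℂ V) : 0 ≤ rhoEnd f :=
  mul_nonneg (by norm_num) <| Multiset.sum_nonneg fun _ hx => by
    obtain ⟨z, -, rfl⟩ := Multiset.mem_map.1 hx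
    exact abs_nonneg _

theorem re_eq_zero_of_rhoEnd_eq_zero {f : Module.End ℂ V} (hf : rhoEnd f = 0) {μ : ℂ}
    (hμ : μ ∈ f.charpoly.roots) : μ.re = 0 := by
  have hsum : (f.charpoly.roots.map fun z => |z.re|).sum = 0 := by
    simpa [rhoEnd] using hf
  have hle := Multiset.single_le_sum (fun x hx => by
      obtain ⟨z, -, rfl⟩ := Multiset.mem_map.1 hx
      exact abs_nonneg z.re) _ (Multiset.mem_map_of_mem (fun z : ℂ => |z.re|) hμ)
  exact abs_nonpos_iff.1 (hsum ▸ hle)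

theorem isNilpotent_of_rhoEnd_eq_zero {f : Module.End ℂ V} (hf : rhoEnd f = 0)
    (hIf : rhoEnd (Complex.I • f) = 0) : IsNilpotent f := by
  refine f.isNilpotent_of_forall_mem_roots_charpoly_eq_zero fun μ hμ => Complex.ext ?_ ?_
  · exact re_eq_zero_of_rhoEnd_eq_zero hf hμ
  · simpa using re_eq_zero_of_rhoEnd_eq_zero hIf (f.mul_mem_roots_charpoly_smul Complex.I hμ)

end rho

theorem rhoSub_eq_rhoEnd_ad (k : LieSubalgebra ℂ g₀) (x : k) :
    rhoSub k x x.2 = rhoEnd (ad ℂ k x) :=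
  rfl

theorem LieIdeal.le_center_of_forall_isNilpotent_ad {R L : Type*} [CommRing R] [LieRing L]
    [LieAlgebra R L] [IsNoetherian R L] (hred : radical R L = center R L) (I : LieIdeal R L)
    (hI : ∀ x ∈ I, IsNilpotent (ad R L x)) : I ≤ center R L := by
  have : LieRing.IsNilpotent I := (isNilpotent_iff_forall (R := R) (L := I)).2 fun x =>
    LieSubalgebra.isNilpotent_ad_of_isNilpotent_ad (I : LieSubalgebra R L) (hI x x.2)
  exact hred ▸ (LieIdeal.solvable_iff_le_radical R L I).1 inferInstance

theorem LieIdeal.isSolvable_of_lie_le {R L : Type*} [CommRing R] [LieRing L] [LieAlgebra R L]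
    {I J : LieIdeal R L} [IsSolvable J] (hIJ : ⁅I, I⁆ ≤ J) : IsSolvable I := by
  obtain ⟨k, hk⟩ := IsSolvable.solvable (R := R) (L := J)
  rw [LieIdeal.derivedSeries_eq_bot_iff] at hk
  refine IsSolvable.mk (R := R) (k := k + 1) ?_
  rw [LieIdeal.derivedSeries_eq_bot_iff, derivedSeriesOfIdeal_add, derivedSeriesOfIdeal_succ,
    derivedSeriesOfIdeal_zero, ← le_bot_iff, ← hk]
  exact derivedSeriesOfIdeal_mono hIJ k

theorem LieIdeal.lie_mem_of_mem_sup {R L : Type*} [CommRing R] [LieRing L] [LieAlgebra R L]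
    {S : Submodule R L} (U : LieIdeal R L) {a b : L} (ha : a ∈ S ⊔ U.toSubmodule)
    (hb : b ∈ S ⊔ U.toSubmodule) (hS : ∀ y ∈ S, ∀ z ∈ S, ⁅y, z⁆ = 0) : ⁅a, b⁆ ∈ U := by
  obtain ⟨a₁, ha₁, a₂, ha₂, rfl⟩ := Submodule.mem_sup.1 ha
  obtain ⟨b₁, hb₁, b₂, hb₂, rfl⟩ := Submodule.mem_sup.1 hb
  rw [add_lie, lie_add, lie_add, hS a₁ ha₁ b₁ hb₁, zero_add]
  exact add_mem (U.lie_mem hb₂) (add_mem (lie_mem_left R L U _ _ ha₂) (U.lie_mem hb₂))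

theorem ideal_with_vanishing_rho_is_solvable_general
    (l₀ u₀ h : LieSubalgebra ℂ g₀)
    -- u₀ is the nilradical : a nilpotent ideal of g₀
    (hu₀ideal : ∀ X : g₀, ∀ Y ∈ u₀, ⁅X, Y⁆ ∈ u₀)
    (hu₀nilp : LieRing.IsNilpotent u₀)
    -- l₀ is reductive : its radical is its center
    (hred : LieAlgebra.radical ℂ l₀ = LieAlgebra.center ℂ l₀)
    -- h is an ideal of g₀
    (hideal : ∀ X : g₀, ∀ Y ∈ h, ⁅X, Y⁆ ∈ h)
    -- h = s ⊕ v with s = h ∩ l₀ and v = h ∩ u₀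
    (hdecomp : h.toSubmodule =
      (h.toSubmodule ⊓ l₀.toSubmodule) ⊔ (h.toSubmodule ⊓ u₀.toSubmodule))
    -- the ρ-inequality ρ_{l₀} ≤ 2 ρ_{g₀/h} = 0 on s
    (hrho : ∀ Y : g₀, ∀ hYh : Y ∈ h, ∀ hYl : Y ∈ l₀,
      rhoSub l₀ Y hYl ≤ 2 * rhoQuot h Y hYh ∧ rhoQuot h Y hYh = 0) :
    (∀ Y : g₀, Y ∈ h → Y ∈ l₀ → ∀ Z : g₀, Z ∈ h → Z ∈ l₀ → ⁅Y, Z⁆ = 0) ∧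
      LieAlgebra.IsSolvable h := by
  obtain ⟨H, rfl⟩ := (LieSubalgebra.exists_lieIdeal_coe_eq_iff (K := h)).2 hideal
  obtain ⟨U, rfl⟩ := (LieSubalgebra.exists_lieIdeal_coe_eq_iff (K := u₀)).2 hu₀ideal
  have hrho_zero (x : l₀) (hx : (x : g₀) ∈ H) : rhoEnd (ad ℂ l₀ x) = 0 := by
    obtain ⟨hle, hquot⟩ := hrho x hx x.2
    rw [hquot, mul_zero, rhoSub_eq_rhoEnd_ad] at hle
    exact le_antisymm hle (rhoEnd_nonneg _)
  have hs_central : LieIdeal.comap l₀.incl H ≤ center ℂ l₀ :=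
    LieIdeal.le_center_of_forall_isNilpotent_ad hred _ fun x hx =>
      isNilpotent_of_rhoEnd_eq_zero (hrho_zero x hx)
        (map_smul (ad ℂ l₀) Complex.I x ▸ hrho_zero _ (H.smul_mem Complex.I hx))
  have hs_abelian (Y : g₀) (hYh : Y ∈ H) (hYl : Y ∈ l₀) (Z : g₀) (hZh : Z ∈ H) (hZl : Z ∈ l₀) :
      ⁅Y, Z⁆ = 0 := by
    have := (LieModule.mem_maxTrivSubmodule ..).1 (hs_central (x := ⟨Z, hZl⟩) hZh) ⟨Y, hYl⟩
    simpa using congrArg Subtype.val this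
  have : LieRing.IsNilpotent U := hu₀nilp
  refine ⟨hs_abelian, LieIdeal.isSolvable_of_lie_le (J := U) ?_⟩
  have hH : (H : LieSubalgebra ℂ g₀).toSubmodule ≤
      ((H : LieSubalgebra ℂ g₀).toSubmodule ⊓ l₀.toSubmodule) ⊔ U.toSubmodule :=
    hdecomp.le.trans (sup_le_sup_left inf_le_right _)
  exact (LieSubmodule.lie_le_iff _ _ _).2 fun a ha b hb => U.lie_mem_of_mem_sup (hH ha) (hH hb)
    fun y hy z hz => hs_abelian y hy.1 hy.2 z hz.1 hz.2

/-- Let `g₀ = l₀ ⊕ u₀` be a complex algebraic Lie algebra with reductive part `l₀` and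
nilradical `u₀`, and `h = s ⊕ v ⊆ g₀` an ideal of `g₀` with `s = h ∩ l₀` an ideal of `l₀`
and `v = h ∩ u₀`.  If `ρ_{l₀}(Y) ≤ 2 ρ_{g₀/h}(Y) = 0` for all `Y ∈ s`, then `s` is
abelian and `h` is solvable. -/
theorem ideal_with_vanishing_rho_is_solvable
    (l₀ u₀ h : LieSubalgebra ℂ g₀)
    -- decomposition g₀ = l₀ ⊕ u₀
    (hsum : l₀.toSubmodule ⊔ u₀.toSubmodule = ⊤)
    (hdisj : l₀.toSubmodule ⊓ u₀.toSubmodule = ⊥)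
    -- u₀ is the nilradical : a nilpotent ideal of g₀
    (hu₀ideal : ∀ X : g₀, ∀ Y ∈ u₀, ⁅X, Y⁆ ∈ u₀)
    (hu₀nilp : LieRing.IsNilpotent u₀)
    -- l₀ is reductive : its radical is its center
    (hred : LieAlgebra.radical ℂ l₀ = LieAlgebra.center ℂ l₀)
    -- h is an ideal of g₀
    (hideal : ∀ X : g₀, ∀ Y ∈ h, ⁅X, Y⁆ ∈ h)
    -- s = h ∩ l₀ is an ideal of l₀
    (hsideal : ∀ X ∈ l₀, ∀ Y ∈ h, Y ∈ l₀ → ⁅X, Y⁆ ∈ l₀)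
    -- h = s ⊕ v with s = h ∩ l₀ and v = h ∩ u₀
    (hdecomp : h.toSubmodule =
      (h.toSubmodule ⊓ l₀.toSubmodule) ⊔ (h.toSubmodule ⊓ u₀.toSubmodule))
    -- the ρ-inequality ρ_{l₀} ≤ 2 ρ_{g₀/h} = 0 on s
    (hrho : ∀ Y : g₀, ∀ hYh : Y ∈ h, ∀ hYl : Y ∈ l₀,
      rhoSub l₀ Y hYl ≤ 2 * rhoQuot h Y hYh ∧ rhoQuot h Y hYh = 0) :
    (∀ Y : g₀, Y ∈ h → Y ∈ l₀ → ∀ Z : g₀, Z ∈ h → Z ∈ l₀ → ⁅Y, Z⁆ = 0) ∧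
      LieAlgebra.IsSolvable h :=
  ideal_with_vanishing_rho_is_solvable_general l₀ u₀ h hu₀ideal hu₀nilp hred hideal hdecomp hrho
end
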